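/- arXiv:2509.25575 — 4 statements merged into one kernel-verified Lean document; each statement's English description precedes it below -/
import Mathlib

section
/- For all k ≥ 1 and all real γ, the inequality 1 - k·cos(γ)·(1 + cos(γ)) ≤ 2(1 + k)·tan²(γ/2) holds (where tan²(γ/2) is interpreted as +∞ when γ is an odd multiple of π, in which case the inequality trivially holds; it suffices to prove it for γ with cos(γ) ≠ -1). -/
open Real

theorem lemma_sinterm_upperbound (k γ : ℝ) (hk : 1 ≤ k) (hγ : Real.cos γ ≠ -1) :
    1 - k * Real.cos γ * (1 + Real.cos γ) ≤ 2 * (1 + k) * Real.tan (γ / 2) ^ 2 := by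
  have hc2 : Real.cos γ = 2 * Real.cos (γ / 2) ^ 2 - 1 := by
    have := Real.cos_sq (γ / 2)
    have h2 : 2 * (γ / 2) = γ := by ring
    rw [h2] at this
    linarith
  set c := Real.cos (γ / 2)
  set s := Real.sin (γ / 2)
  have hpyth : s ^ 2 + c ^ 2 = 1 := Real.sin_sq_add_cos_sq _
  have hcne : c ≠ 0 := by
    intro h
    apply hγ
    rw [hc2, h]; ring
  have htan : Real.tan (γ / 2) = s / c := Real.tan_eq_sin_div_cos _
  rw [hc2, htan, div_pow]
  have hc2pos : 0 < c ^ 2 := by positivity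
  rw [show 2 * (1 + k) * (s ^ 2 / c ^ 2) = 2 * (1 + k) * s ^ 2 / c ^ 2 by ring, le_div_iff₀ hc2pos]
  have hs2 : s ^ 2 = 1 - c ^ 2 := by linarith
  have hx1 : c ^ 2 ≤ 1 := by nlinarith [sq_nonneg s]
  rw [hs2]
  set x := c ^ 2
  have h1 : (0:ℝ) ≤ 2*x^3 - x^2 - x + 1 := by
    nlinarith [sq_nonneg (x-1), mul_nonneg hc2pos.le (sq_nonneg (x-1)), sq_nonneg x]
  have h2 : (0:ℝ) ≤ 4*x^3 - 2*x^2 - 5*x + 4 := by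
    nlinarith [sq_nonneg (x-1), mul_nonneg hc2pos.le (sq_nonneg (x-1)), sq_nonneg (2*x-1), mul_nonneg hc2pos.le (sq_nonneg (2*x-1))]
  nlinarith [mul_nonneg (sub_nonneg.2 hk) h1]
end

section
/- Let k₁, k₂, k₃, k₄ > 0, q = √(k₁/k₃), and Δ(δ) = δ. Consider the system δ̇ = -k₁(k₂Δ/√(1+4k₂²Δ²) - z·ψ(z,γ)), ż = -k₄z - k₃·ψ(z,γ)·Δ, where ψ(z,γ) = (sin(2z-2γ)+sin(2γ))/(2z) for z≠0 and ψ(0,γ)=cos(2γ), with γ = z - (1/2)·arctan(2k₂Δ). Then the derivative of V(δ,z) = Δ² + q²z² along solutions equals -2k₁k₂Δ²/√(1+4k₂²Δ²) - 2k₄q²z². -/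
open Real

noncomputable def psi (z γ : ℝ) : ℝ :=
  if z = 0 then Real.cos (2 * γ)
  else (Real.sin (2 * z - 2 * γ) + Real.sin (2 * γ)) / (2 * z)

/-- Lyapunov derivative computation for the GloBa backstepping controller (Δ(δ) = δ). -/
theorem globa_lyapunov_derivative
    (k₁ k₂ k₃ k₄ q : ℝ) (hk₁ : 0 < k₁) (hk₂ : 0 < k₂) (hk₃ : 0 < k₃) (hk₄ : 0 < k₄)
    (hq : q = Real.sqrt (k₁ / k₃))
    (δ z γ : ℝ → ℝ) (t : ℝ)
    (hγ : ∀ s, γ s = z s - (1 / 2) * Real.arctan (2 * k₂ * δ s))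
    (hδ : HasDerivAt δ
      (-k₁ * (k₂ * δ t / Real.sqrt (1 + 4 * k₂ ^ 2 * (δ t) ^ 2)
        - z t * psi (z t) (γ t))) t)
    (hz : HasDerivAt z (-k₄ * z t - k₃ * psi (z t) (γ t) * δ t) t) :
    HasDerivAt (fun s => (δ s) ^ 2 + q ^ 2 * (z s) ^ 2)
      (-2 * k₁ * k₂ * (δ t) ^ 2 / Real.sqrt (1 + 4 * k₂ ^ 2 * (δ t) ^ 2)
        - 2 * k₄ * q ^ 2 * (z t) ^ 2) t := by
  have hq2 : q ^ 2 = k₁ / k₃ := by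
    rw [hq, sq_sqrt (by positivity)]
  have hS : 0 < Real.sqrt (1 + 4 * k₂ ^ 2 * (δ t) ^ 2) := by positivity
  have h := ((hδ.pow 2).add ((hz.pow 2).const_mul (q ^ 2)))
  convert h using 1
  · rfl
  · rfl
  · rfl
  set S := Real.sqrt (1 + 4 * k₂ ^ 2 * (δ t) ^ 2)
  rw [hq2]
  field_simp
  ring
end

section
/- Let k₁, k₂, k₃, k₄ > 0 and q² = k₁/k₃. The function V(δ,z) = Δ(δ)² + q²z² with Δ(δ) = 2·tan(δ/2), defined on {(δ,z) : |δ| < π, z ∈ ℝ}, is positive definite (V(0,0)=0, V > 0 elsewhere), tends to +∞ as |δ| → π or |z| → ∞, and its derivative along δ̇ = -k₁(k₂Δ/√(1+4k₂²Δ²) - zψ), ż = -k₄z - k₃·(∂Δ/∂δ)·ψ·Δ equals -(2k₁k₂Δ²/√(1+4k₂²Δ²))·(1 + tan²(δ/2)) - 2k₄q²z², which is negative definite on the domain. -/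
open Real Filter

noncomputable def Dlt (δ : ℝ) : ℝ := 2 * Real.tan (δ / 2)

noncomputable def Vbf (q δ z : ℝ) : ℝ := (Dlt δ) ^ 2 + q ^ 2 * z ^ 2


lemma dlt_ne_zero {δ : ℝ} (h : |δ| < Real.pi) (h0 : δ ≠ 0) : Dlt δ ≠ 0 := by
  have hpi := Real.pi_pos
  rw [abs_lt] at h
  rcases lt_or_gt_of_ne h0 with hneg | hpos
  · have : Real.tan (δ / 2) < 0 := by
      have : 0 < Real.tan (-(δ / 2)) :=
        Real.tan_pos_of_pos_of_lt_pi_div_two (by linarith) (by linarith)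
      rw [Real.tan_neg] at this; linarith
    unfold Dlt; nlinarith
  · have : 0 < Real.tan (δ / 2) :=
      Real.tan_pos_of_pos_of_lt_pi_div_two (by linarith) (by linarith)
    unfold Dlt; nlinarith

lemma cos_half_ne {δ : ℝ} (h : |δ| < Real.pi) : Real.cos (δ / 2) ≠ 0 := by
  rw [abs_lt] at h
  exact ne_of_gt (Real.cos_pos_of_mem_Ioo ⟨by linarith [h.1], by linarith [h.2]⟩)

lemma one_div_cos_sq {x : ℝ} (h : Real.cos x ≠ 0) :
    1 / Real.cos x ^ 2 = 1 + Real.tan x ^ 2 := by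
  have h2 : Real.tan x ^ 2 = Real.sin x ^ 2 / Real.cos x ^ 2 := by
    rw [Real.tan_eq_sin_div_cos]; ring
  rw [h2]
  field_simp
  linarith [Real.sin_sq_add_cos_sq x]

/-- Barrier Lyapunov function analysis for the BAR-FLi controller. -/
theorem barfli_barrier_lyapunov
    (k₁ k₂ k₃ k₄ q : ℝ) (hk₁ : 0 < k₁) (hk₂ : 0 < k₂) (hk₃ : 0 < k₃) (hk₄ : 0 < k₄)
    (hq : q ^ 2 = k₁ / k₃) :
    -- positive definiteness on {|δ| < π}
    (Vbf q 0 0 = 0) ∧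
    (∀ δ z : ℝ, |δ| < Real.pi → (δ, z) ≠ (0, 0) → 0 < Vbf q δ z) ∧
    -- blow-up as |δ| → π
    (∀ z : ℝ, Filter.Tendsto (fun δ => Vbf q δ z) (nhdsWithin Real.pi (Set.Iio Real.pi)) Filter.atTop) ∧
    (∀ z : ℝ, Filter.Tendsto (fun δ => Vbf q δ z) (nhdsWithin (-Real.pi) (Set.Ioi (-Real.pi))) Filter.atTop) ∧
    -- blow-up as |z| → ∞
    (∀ δ : ℝ, |δ| < Real.pi → Filter.Tendsto (fun z => Vbf q δ z) (Filter.cocompact ℝ) Filter.atTop) ∧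
    -- derivative along solutions and negative definiteness
    (∀ (δ z γ : ℝ → ℝ) (t : ℝ), |δ t| < Real.pi →
      (∀ s, γ s = z s - (1 / 2) * Real.arctan (2 * k₂ * Dlt (δ s))) →
      HasDerivAt δ
        (-k₁ * (k₂ * Dlt (δ t) / Real.sqrt (1 + 4 * k₂ ^ 2 * (Dlt (δ t)) ^ 2)
          - z t * psi (z t) (γ t))) t →
      HasDerivAt z
        (-k₄ * z t - k₃ * (1 + Real.tan (δ t / 2) ^ 2) * psi (z t) (γ t) * Dlt (δ t)) t →
      HasDerivAt (fun s => Vbf q (δ s) (z s))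
        (-(2 * k₁ * k₂ * (Dlt (δ t)) ^ 2 / Real.sqrt (1 + 4 * k₂ ^ 2 * (Dlt (δ t)) ^ 2))
            * (1 + Real.tan (δ t / 2) ^ 2)
          - 2 * k₄ * q ^ 2 * (z t) ^ 2) t) ∧
    (∀ δ z : ℝ, |δ| < Real.pi → (δ, z) ≠ (0, 0) →
      -(2 * k₁ * k₂ * (Dlt δ) ^ 2 / Real.sqrt (1 + 4 * k₂ ^ 2 * (Dlt δ) ^ 2))
          * (1 + Real.tan (δ / 2) ^ 2)
        - 2 * k₄ * q ^ 2 * z ^ 2 < 0) := by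

  have hq2 : 0 < q ^ 2 := hq ▸ div_pos hk₁ hk₃
  have hk1eq : k₁ = q ^ 2 * k₃ := by rw [hq, div_mul_cancel₀ k₁ hk₃.ne']
  refine ⟨?_, ?_, ?_, ?_, ?_, ?_, ?_⟩
  · simp [Vbf, Dlt]
  · -- positive definiteness
    intro δ z hδ hne
    by_cases h0 : δ = 0
    · have hz : z ≠ 0 := by
        intro hz; exact hne (by simp [h0, hz])
      have : Vbf q δ z = q ^ 2 * z ^ 2 := by simp [Vbf, Dlt, h0]
      rw [this]; positivity
    · have hD := dlt_ne_zero hδ h0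
      have : 0 < (Dlt δ) ^ 2 := by positivity
      have hz2 : 0 ≤ q ^ 2 * z ^ 2 := by positivity
      unfold Vbf; linarith
  · -- blow-up at π
    intro z
    have h1 : Tendsto (fun x : ℝ => x / 2) (nhdsWithin Real.pi (Set.Iio Real.pi))
        (nhdsWithin (Real.pi / 2) (Set.Iio (Real.pi / 2))) := by
      apply tendsto_nhdsWithin_of_tendsto_nhds_of_eventually_within
      · exact ((continuous_id.div_const 2).tendsto Real.pi).mono_left nhdsWithin_le_nhds
      · filter_upwards [self_mem_nhdsWithin] with x hx
        simp only [Set.mem_Iio] at hx ⊢; linarith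
    have htan : Tendsto (fun x : ℝ => Real.tan (x / 2))
        (nhdsWithin Real.pi (Set.Iio Real.pi)) atTop :=
      Real.tendsto_tan_pi_div_two.comp h1
    have hD : Tendsto Dlt (nhdsWithin Real.pi (Set.Iio Real.pi)) atTop := by
      unfold Dlt; exact htan.const_mul_atTop two_pos
    have hsq : Tendsto (fun x => Dlt x ^ 2) (nhdsWithin Real.pi (Set.Iio Real.pi)) atTop := by
      have := hD.atTop_mul_atTop₀ hD
      simpa [pow_two] using this
    simpa [Vbf] using tendsto_atTop_add_const_right _ (q ^ 2 * z ^ 2) hsq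
  · -- blow-up at -π
    intro z
    have h1 : Tendsto (fun x : ℝ => x / 2) (nhdsWithin (-Real.pi) (Set.Ioi (-Real.pi)))
        (nhdsWithin (-(Real.pi / 2)) (Set.Ioi (-(Real.pi / 2)))) := by
      apply tendsto_nhdsWithin_of_tendsto_nhds_of_eventually_within
      · have : Tendsto (fun x : ℝ => x / 2) (nhds (-Real.pi)) (nhds (-Real.pi / 2)) :=
          (continuous_id.div_const 2).tendsto (-Real.pi)
        simpa [neg_div] using this.mono_left nhdsWithin_le_nhds
      · filter_upwards [self_mem_nhdsWithin] with x hx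
        simp only [Set.mem_Ioi] at hx ⊢; linarith
    have htan : Tendsto (fun x : ℝ => Real.tan (x / 2))
        (nhdsWithin (-Real.pi) (Set.Ioi (-Real.pi))) atBot :=
      Real.tendsto_tan_neg_pi_div_two.comp h1
    have hD : Tendsto Dlt (nhdsWithin (-Real.pi) (Set.Ioi (-Real.pi))) atBot := by
      unfold Dlt; exact htan.const_mul_atBot two_pos
    have hsq : Tendsto (fun x => Dlt x ^ 2)
        (nhdsWithin (-Real.pi) (Set.Ioi (-Real.pi))) atTop := by
      have := hD.atBot_mul_atBot₀ hD
      simpa [pow_two] using this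
    simpa [Vbf] using tendsto_atTop_add_const_right _ (q ^ 2 * z ^ 2) hsq
  · -- blow-up as |z| → ∞
    intro δ hδ
    have h1 : Tendsto (fun z : ℝ => z ^ 2) (cocompact ℝ) atTop := by
      have h := (tendsto_pow_atTop (n := 2) two_ne_zero).comp (tendsto_norm_cocompact_atTop (E := ℝ))
      exact h.congr fun z => by simp [Function.comp, Real.norm_eq_abs, sq_abs]
    have h2 : Tendsto (fun z : ℝ => q ^ 2 * z ^ 2) (cocompact ℝ) atTop :=
      h1.const_mul_atTop hq2
    simpa [Vbf] using tendsto_atTop_add_const_left _ ((Dlt δ) ^ 2) h2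
  · -- derivative along solutions
    intro δ z γ t hδt hγ hδ' hz'
    have hcos := cos_half_ne hδt
    set a := Real.sqrt (1 + 4 * k₂ ^ 2 * (Dlt (δ t)) ^ 2) with ha_def
    have ha : a ≠ 0 := by
      apply ne_of_gt; apply Real.sqrt_pos.2; positivity
    set D : ℝ := -k₁ * (k₂ * Dlt (δ t) / a - z t * psi (z t) (γ t)) with hD_def
    set Z : ℝ := -k₄ * z t - k₃ * (1 + Real.tan (δ t / 2) ^ 2) * psi (z t) (γ t) * Dlt (δ t)
      with hZ_def
    have hT : HasDerivAt (fun s => Real.tan (δ s / 2)) (1 / Real.cos (δ t / 2) ^ 2 * (D / 2)) t :=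
      HasDerivAt.comp (h₂ := Real.tan) t (Real.hasDerivAt_tan hcos) (hδ'.div_const 2)
    have hΔ : HasDerivAt (fun s => Dlt (δ s)) (2 * (1 / Real.cos (δ t / 2) ^ 2 * (D / 2))) t := by
      simpa [Dlt] using hT.const_mul 2
    have hV := (hΔ.pow 2).add ((hz'.pow 2).const_mul (q ^ 2))
    refine hV.congr_deriv ?_
    rw [one_div_cos_sq hcos, hD_def, hk1eq]
    field_simp
    ring
  · -- negative definiteness
    intro δ z hδ hne
    have hP : 0 < 1 + Real.tan (δ / 2) ^ 2 := by positivity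
    have ha : 0 < Real.sqrt (1 + 4 * k₂ ^ 2 * (Dlt δ) ^ 2) := by
      apply Real.sqrt_pos.2; positivity
    by_cases h0 : δ = 0
    · have hz : z ≠ 0 := by intro hz; exact hne (by simp [h0, hz])
      have hDz : Dlt δ = 0 := by simp [Dlt, h0]
      rw [hDz]
      have : 0 < 2 * k₄ * q ^ 2 * z ^ 2 := by positivity
      norm_num
      positivity
    · have hD := dlt_ne_zero hδ h0
      have h1 : 0 < 2 * k₁ * k₂ * (Dlt δ) ^ 2 / Real.sqrt (1 + 4 * k₂ ^ 2 * (Dlt δ) ^ 2) := by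
        apply div_pos _ ha; positivity
      have h2 : 0 ≤ 2 * k₄ * q ^ 2 * z ^ 2 := by positivity
      nlinarith
end

section
/- Let k₁, k₂, k₃ > 0 with k₁k₃ ≥ k₂², and q = √(k₁/k₃). Along the dynamics δ̇ = (k₁/2)sin(2γ), γ̇ = -k₂sin(γ) - k₃δ·cos(γ)·(1+cos(γ))²/4, the function U(δ,γ) = δ² + 4q²tan²(γ/2) (defined for |γ| < π) satisfies U̇ = -2k₂q²·4tan²(γ/2). -/
open Real

/-- Dissipation identity for the BoLSA controller: along the closed loop,
`U = δ² + 4q²tan²(γ/2)` satisfies `U̇ = -2k₂q²·4tan²(γ/2)`. -/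
theorem bolsa_U_dissipation
    (k₁ k₂ k₃ q : ℝ) (hk₁ : 0 < k₁) (hk₂ : 0 < k₂) (hk₃ : 0 < k₃)
    (hgain : k₂ ^ 2 ≤ k₁ * k₃) (hq : q = Real.sqrt (k₁ / k₃))
    (δ γ : ℝ → ℝ) (t : ℝ) (hγt : |γ t| < Real.pi)
    (hδ : HasDerivAt δ ((k₁ / 2) * Real.sin (2 * γ t)) t)
    (hγ : HasDerivAt γ
      (-k₂ * Real.sin (γ t) - k₃ * δ t * Real.cos (γ t) * (1 + Real.cos (γ t)) ^ 2 / 4) t) :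
    HasDerivAt (fun s => (δ s) ^ 2 + 4 * q ^ 2 * Real.tan (γ s / 2) ^ 2)
      (-2 * k₂ * q ^ 2 * (4 * Real.tan (γ t / 2) ^ 2)) t := by
  have hq2 : q ^ 2 = k₁ / k₃ := by
    rw [hq, sq_sqrt (by positivity)]
  have hcos : Real.cos (γ t / 2) ≠ 0 := by
    apply Real.cos_ne_zero_iff.mpr
    intro n
    rcases abs_lt.mp hγt with ⟨h1, h2⟩
    rcases lt_trichotomy n 0 with hn | hn | hn
    · have : (n : ℝ) ≤ -1 := by exact_mod_cast (by omega : n ≤ -1)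
      intro h
      have : γ t / 2 ≤ -Real.pi / 2 := by nlinarith [Real.pi_pos]
      linarith
    · subst hn; intro h; simp at h; linarith [Real.pi_pos]
    · have : (1 : ℝ) ≤ n := by exact_mod_cast hn
      intro h
      have : Real.pi / 2 ≤ γ t / 2 := by nlinarith [Real.pi_pos]
      linarith
  have h1 : HasDerivAt (fun s => γ s / 2)
      ((-k₂ * Real.sin (γ t) - k₃ * δ t * Real.cos (γ t) * (1 + Real.cos (γ t)) ^ 2 / 4) / 2) t :=
    hγ.div_const 2
  have h2 : HasDerivAt Real.tan (1 / Real.cos (γ t / 2) ^ 2) (γ t / 2) :=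
    Real.hasDerivAt_tan hcos
  have h3 := h2.comp t h1
  have h5 : HasDerivAt (fun s => (δ s) ^ 2 + 4 * q ^ 2 * Real.tan (γ s / 2) ^ 2)
      ((2 : ℕ) * δ t ^ (2 - 1) * ((k₁ / 2) * Real.sin (2 * γ t)) +
        4 * q ^ 2 * ((2 : ℕ) * Real.tan (γ t / 2) ^ (2 - 1) *
          (1 / Real.cos (γ t / 2) ^ 2 *
            ((-k₂ * Real.sin (γ t) - k₃ * δ t * Real.cos (γ t) * (1 + Real.cos (γ t)) ^ 2 / 4) / 2)))) t := by
    exact ((hδ.pow 2).add (((h3.pow 2).const_mul (4 * q ^ 2))))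
  convert h5 using 1
  have hsin2 : Real.sin (2 * γ t) = 2 * Real.sin (γ t) * Real.cos (γ t) := Real.sin_two_mul _
  have hsin : Real.sin (γ t) = 2 * Real.sin (γ t / 2) * Real.cos (γ t / 2) := by
    rw [← Real.sin_two_mul]; ring_nf
  have hcosg : Real.cos (γ t) = 2 * Real.cos (γ t / 2) ^ 2 - 1 := by
    rw [← Real.cos_two_mul]; ring_nf
  rw [Real.tan_eq_sin_div_cos, hsin2, hsin, hcosg, hq2]
  have hk₃' : k₃ ≠ 0 := ne_of_gt hk₃
  field_simp
  ring_nf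
  field_simp
  ring
end
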